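/- arXiv:2007.10645 — 14 statements merged into one kernel-verified Lean document; each statement's English description precedes it below -/
import Mathlib

section
/- Let $a$ be an element of an associative ring $R$ with Drazin inverse $x$ of index at most $n$, and set $v = a^2 x$. Then $v$ is a Drazin inverse of $x$ of index at most $n$: $x^n v x = x^n$, $vxv = v$, and $xv = vx$. -/
theorem drazin_inverse_of_x {R : Type*} [Ring R] (a x : R) (n : ℕ) (hn : 0 < n)
    (h1 : a ^ n * x * a = a ^ n) (h3 : x * a * x = x) (h5 : a * x = x * a) :
    x ^ n * (a ^ 2 * x) * x = x ^ n ∧ (a ^ 2 * x) * x * (a ^ 2 * x) = a ^ 2 * x ∧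
      x * (a ^ 2 * x) = (a ^ 2 * x) * x := by
  obtain ⟨m, rfl⟩ : ∃ m, n = m + 1 := ⟨n - 1, (Nat.succ_pred_eq_of_pos hn).symm⟩
  have hax2 : a * x * x = x := by rw [h5]; exact h3
  have hx2a : x * x * a = x := by rw [mul_assoc, ← h5, ← mul_assoc]; exact h3
  refine ⟨?_, ?_, ?_⟩
  · have e1 : x ^ (m + 1) * (a ^ 2 * x) * x = x ^ m * (x * a) * (a * x * x) := by
      rw [pow_succ, sq]; noncomm_ring
    rw [e1, hax2, mul_assoc, h3, ← pow_succ]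
  · have e2 : a ^ 2 * x * x * (a ^ 2 * x) = a ^ 2 * (x * x * a) * (a * x) := by
      rw [sq]; noncomm_ring
    rw [e2, hx2a, mul_assoc, ← mul_assoc x a x, h3]
  · have hc : x * a ^ 2 = a ^ 2 * x := ((show Commute a x from h5).symm.pow_right 2).eq
    rw [← mul_assoc, hc]
end

section
/- Let $a$ be an element of an associative ring $R$ with Drazin inverse $x$ of index at most $n$, and set $z = a + x - a^2 x$. Then $z$ satisfies $a^n z a = a^n$, $zaz - aza = z - a$, and $az = za$. -/
theorem complete_inverse_exists {R : Type*} [Ring R] (a x : R) (n : ℕ) (hn : 0 < n)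
    (h1 : a ^ n * x * a = a ^ n) (h3 : x * a * x = x) (h5 : a * x = x * a) :
    a ^ n * (a + x - a ^ 2 * x) * a = a ^ n ∧
      (a + x - a ^ 2 * x) * a * (a + x - a ^ 2 * x) - a * (a + x - a ^ 2 * x) * a
        = (a + x - a ^ 2 * x) - a ∧
      a * (a + x - a ^ 2 * x) = (a + x - a ^ 2 * x) * a := by
  have hxx : x * (x * a) = x := by
    rw [← h5, ← mul_assoc, h3]
  have hxxb : ∀ b : R, x * (x * (a * b)) = x * b := fun b => by
    rw [← mul_assoc, ← mul_assoc, mul_assoc x x a, hxx]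
  have h5' : ∀ b : R, a * (x * b) = x * (a * b) := fun b => by
    rw [← mul_assoc, h5, mul_assoc]
  refine ⟨?_, ?_, ?_⟩
  · have c : Commute (x * a) (a ^ 2) :=
      (Commute.mul_left (h5.symm) (Commute.refl a)).pow_right 2
    have key : a ^ n * (a ^ 2 * x * a) = a ^ n * a ^ 2 := by
      rw [mul_assoc (a ^ 2), ← c.eq, ← mul_assoc, ← mul_assoc, h1]
    calc a ^ n * (a + x - a ^ 2 * x) * a
        = a ^ n * (a * a) + a ^ n * x * a - a ^ n * (a ^ 2 * x * a) := by noncomm_ring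
      _ = a ^ n * a ^ 2 + a ^ n - a ^ n * a ^ 2 := by rw [key, h1, ← pow_two]
      _ = a ^ n := by abel
  · simp only [mul_add, add_mul, mul_sub, sub_mul, pow_two, mul_assoc, h5, h5', hxx, hxxb]
    abel
  · simp only [mul_add, add_mul, mul_sub, sub_mul, pow_two, mul_assoc, h5, h5', hxx, hxxb]
end

section
/- Let $a$ be an element of an associative ring $R$ that has a Drazin inverse of index at most $n$. If $u$ and $z$ both satisfy $a^n w a = a^n$, $waw - awa = w - a$, and $aw = wa$ (with $w = u$ or $w = z$), then $u = z$. That is, the complete inverse of $a$ is unique. -/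
private lemma idem_pow' {R : Type*} [Monoid R] {e : R} (he : e * e = e) :
    ∀ {n : ℕ}, 0 < n → e ^ n = e := by
  intro n hn
  induction n with
  | zero => exact absurd hn (lt_irrefl 0)
  | succ k ih =>
    rcases Nat.eq_zero_or_pos k with hk | hk
    · subst hk; simp
    · rw [pow_succ, ih hk, he]

private lemma complete_eq' {R : Type*} [Ring R] (a : R) (n : ℕ) (hn : 0 < n)
    (x : R) (h1 : a ^ n * x * a = a ^ n) (h3 : x * a * x = x) (h5 : a * x = x * a)
    (w : R) (hw1 : a ^ n * w * a = a ^ n) (hw4 : w * a * w - a * w * a = w - a)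
    (hw5 : a * w = w * a) :
    w = x + a - a * a * x := by
  have cax : Commute a x := h5
  have caw : Commute a w := hw5
  have cae : Commute a (a * x) := (Commute.refl a).mul_right cax
  have caw2 : Commute a (a * w) := (Commute.refl a).mul_right caw
  have cf : Commute a (1 - a * x) := (Commute.one_right a).sub_right cae
  -- idempotent e = a*x
  have he : (a * x) * (a * x) = a * x := by
    rw [mul_assoc a x, ← mul_assoc x a x, h3]
  have hxe : x * (a * x) = x := by rw [← mul_assoc]; exact h3
  have hex : (a * x) * x = x := by rw [h5]; exact h3
  have hane : a ^ n * (a * x) = a ^ n := by rw [h5, ← mul_assoc, h1]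
  have hean : (a * x) * a ^ n = a ^ n := by
    rw [← (cae.pow_left n).eq]; exact hane
  have hanw : a ^ n * (a * w) = a ^ n := by rw [hw5, ← mul_assoc, hw1]
  have hwan : (a * w) * a ^ n = a ^ n := by
    rw [← (caw2.pow_left n).eq]; exact hanw
  have hpow_e : a ^ n * x ^ n = a * x := by rw [← cax.mul_pow, idem_pow' he hn]
  have hpow_x : x ^ n * a ^ n = a * x := by
    rw [← cax.symm.mul_pow, ← h5, idem_pow' he hn]
  have hf : a ^ n * (1 - a * x) = 0 := by rw [mul_sub, mul_one, hane, sub_self]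
  have hfa : (1 - a * x) * a ^ n = 0 := by rw [sub_mul, one_mul, hean, sub_self]
  -- (a*w)*(a*x) = a*x
  have hawe : (a * w) * (a * x) = a * x := by
    rw [← hpow_e, ← mul_assoc, hwan]
  have hewe : (a * x) * w * (a * x) = x := by
    calc (a * x) * w * (a * x) = (a * x) * (w * (a * x)) := by rw [mul_assoc]
      _ = x * (a * (w * (a * x))) := by rw [h5, mul_assoc]
      _ = x * ((a * w) * (a * x)) := by rw [← mul_assoc a w]
      _ = x * (a * x) := by rw [hawe]
      _ = x := hxe
  -- e*w = x
  have cap : Commute a ((a * x) * w * (1 - a * x)) :=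
    (cae.mul_right caw).mul_right cf
  have hp0 : (a * x) * w * (1 - a * x) = 0 := by
    calc (a * x) * w * (1 - a * x)
        = ((a * x) * (a * x)) * w * (1 - a * x) := by rw [he]
      _ = (a * x) * ((a * x) * w * (1 - a * x)) := by
          simp only [mul_assoc]
      _ = (x ^ n * a ^ n) * ((a * x) * w * (1 - a * x)) := by rw [hpow_x, h5]
      _ = x ^ n * (a ^ n * ((a * x) * w * (1 - a * x))) := by rw [mul_assoc]
      _ = x ^ n * (((a * x) * w * (1 - a * x)) * a ^ n) := by
          rw [(cap.pow_left n).eq]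
      _ = x ^ n * ((a * x) * w * ((1 - a * x) * a ^ n)) := by
          rw [mul_assoc ((a * x) * w)]
      _ = 0 := by rw [hfa, mul_zero, mul_zero]
  have hew : (a * x) * w = x := by
    have h' : (a * x) * w - (a * x) * w * (a * x) = 0 := by
      rw [← hp0, mul_sub, mul_one]
    have := sub_eq_zero.mp h'
    rw [this, hewe]
  -- w*e = x
  have caq : Commute a ((1 - a * x) * w * (a * x)) :=
    (cf.mul_right caw).mul_right cae
  have hq0 : (1 - a * x) * w * (a * x) = 0 := by
    have qe : (1 - a * x) * w * (a * x) * (a * x) = (1 - a * x) * w * (a * x) := by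
      rw [mul_assoc ((1 - a * x) * w), he]
    calc (1 - a * x) * w * (a * x)
        = ((1 - a * x) * w * (a * x)) * (a * x) := qe.symm
      _ = ((1 - a * x) * w * (a * x)) * (a ^ n * x ^ n) := by rw [hpow_e]
      _ = (((1 - a * x) * w * (a * x)) * a ^ n) * x ^ n :=
          (mul_assoc ((1 - a * x) * w * (a * x)) (a ^ n) (x ^ n)).symm
      _ = (a ^ n * ((1 - a * x) * w * (a * x))) * x ^ n := by
          rw [(caq.pow_left n).eq]
      _ = ((a ^ n * (1 - a * x)) * (w * (a * x))) * x ^ n := by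
          rw [mul_assoc (1 - a * x) w (a * x),
            ← mul_assoc (a ^ n) (1 - a * x) (w * (a * x))]
      _ = 0 := by rw [hf, zero_mul, zero_mul]
  have hwe : w * (a * x) = x := by
    have h' : w * (a * x) - (a * x) * (w * (a * x)) = 0 := by
      rw [← hq0]; simp only [sub_mul, one_mul, mul_assoc]
    have := sub_eq_zero.mp h'
    rw [this, ← mul_assoc, hewe]
  -- s := w - x, N := a - a*a*x
  set s := w - x with hs_def
  set N := a - a * a * x with hN_def
  have hes : (a * x) * s = 0 := by rw [hs_def, mul_sub, hew, hex, sub_self]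
  have hse : s * (a * x) = 0 := by rw [hs_def, sub_mul, hwe, hxe, sub_self]
  have hxs : x * s = 0 := by
    calc x * s = (x * (a * x)) * s := by rw [hxe]
      _ = x * ((a * x) * s) := mul_assoc x (a * x) s
      _ = 0 := by rw [hes, mul_zero]
  have hsx : s * x = 0 := by
    calc s * x = s * ((a * x) * x) := by rw [hex]
      _ = (s * (a * x)) * x := (mul_assoc s (a * x) x).symm
      _ = 0 := by rw [hse, zero_mul]
  have has : a * s = s * a := by rw [hs_def, mul_sub, sub_mul, hw5, h5]
  have hw_eq : w = x + s := by rw [hs_def]; abel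
  -- reduce the main equation
  have hxas : x * a * s = 0 := by rw [← h5]; exact hes
  have hsax : s * a * x = 0 := by rw [← has, mul_assoc, hsx, mul_zero]
  have e1 : w * a * w = x + a * s * s := by
    calc w * a * w = (x + s) * a * (x + s) := by rw [← hw_eq]
      _ = x * a * x + x * a * s + s * a * x + s * a * s := by noncomm_ring
      _ = x + a * s * s := by rw [h3, hxas, hsax, ← has]; abel
  have e2 : a * w * a = a * a * x + a * a * s := by
    calc a * w * a = a * (x + s) * a := by rw [← hw_eq]
      _ = a * x * a + a * s * a := by noncomm_ring
      _ = a * a * x + a * a * s := by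
          rw [mul_assoc a x a, ← h5, ← mul_assoc, mul_assoc a s a, ← has, ← mul_assoc]
  have key : a * s * s - a * a * s = s - N := by
    have h := hw4
    rw [e1, e2, hw_eq] at h
    calc a * s * s - a * a * s
        = (x + a * s * s - (a * a * x + a * a * s)) - x + a * a * x := by abel
      _ = (x + s - a) - x + a * a * x := by rw [h]
      _ = s - N := by rw [hN_def]; abel
  have hNs : N * s = a * s := by
    calc N * s = a * s - a * a * x * s := by rw [hN_def, sub_mul]
      _ = a * s := by rw [mul_assoc (a * a), hxs, mul_zero, sub_zero]
  have t1 : s * (a * a * x) = 0 := by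
    calc s * (a * a * x) = ((s * a) * a) * x := by rw [← mul_assoc, ← mul_assoc]
      _ = ((a * s) * a) * x := by rw [← has]
      _ = ((a * a) * s) * x := by rw [mul_assoc a s a, ← has, ← mul_assoc]
      _ = (a * a) * (s * x) := by rw [mul_assoc]
      _ = 0 := by rw [hsx, mul_zero]
  have hsN : s * N = a * s := by
    rw [hN_def, mul_sub, t1, sub_zero, ← has]
  have cNs : Commute N s := hNs.trans hsN.symm
  have hN_alt : N = a * (1 - a * x) := by
    rw [hN_def, mul_sub, mul_one, ← mul_assoc]
  have hfid : (1 - a * x) * (1 - a * x) = 1 - a * x := by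
    rw [sub_mul, one_mul, mul_sub, mul_one, he]; abel
  have hNn : N ^ n = 0 := by
    calc N ^ n = (a * (1 - a * x)) ^ n := by rw [hN_alt]
      _ = a ^ n * (1 - a * x) ^ n := cf.mul_pow n
      _ = a ^ n * (1 - a * x) := by rw [idem_pow' hfid hn]
      _ = 0 := hf
  have ht : (N * s) * (s - N) = s - N := by
    calc (N * s) * (s - N) = (N * s) * s - (N * s) * N := by rw [mul_sub]
      _ = a * s * s - a * (s * N) := by rw [hNs, mul_assoc a s N]
      _ = a * s * s - a * (a * s) := by rw [hsN]
      _ = a * s * s - a * a * s := by rw [← mul_assoc]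
      _ = s - N := key
  have iter : ∀ k : ℕ, (N * s) ^ k * (s - N) = s - N := by
    intro k
    induction k with
    | zero => rw [pow_zero, one_mul]
    | succ k ih => rw [pow_succ, mul_assoc, ht, ih]
  have hzero : s - N = 0 := by
    rw [← iter n, cNs.mul_pow, hNn, zero_mul, zero_mul]
  have h' : w - x = a - a * a * x := by
    have := sub_eq_zero.mp hzero
    rw [hs_def, hN_def] at this
    exact this
  rw [sub_eq_iff_eq_add] at h'
  rw [h']; abel

theorem complete_inverse_unique {R : Type*} [Ring R] (a : R) (n : ℕ) (hn : 0 < n)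
    (x : R) (h1 : a ^ n * x * a = a ^ n) (h3 : x * a * x = x) (h5 : a * x = x * a)
    (u z : R)
    (hu1 : a ^ n * u * a = a ^ n) (hu4 : u * a * u - a * u * a = u - a) (hu5 : a * u = u * a)
    (hz1 : a ^ n * z * a = a ^ n) (hz4 : z * a * z - a * z * a = z - a) (hz5 : a * z = z * a) :
    u = z := by
  rw [complete_eq' a n hn x h1 h3 h5 u hu1 hu4 hu5,
      complete_eq' a n hn x h1 h3 h5 z hz1 hz4 hz5]
end

section
/- Let $a$ be an element of an associative ring $R$ with Drazin inverse $x$ of index at most $n$, and set $v = a^2 x$ and $z = a + x - v$. Then for every positive integer $k$, $z^k = a^k + x^k - v^k$. -/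
theorem complete_inverse_pow {R : Type*} [Ring R] (a x : R) (n : ℕ) (hn : 0 < n)
    (h1 : a ^ n * x * a = a ^ n) (h3 : x * a * x = x) (h5 : a * x = x * a) :
    ∀ k : ℕ, 0 < k → (a + x - a ^ 2 * x) ^ k = a ^ k + x ^ k - (a ^ 2 * x) ^ k := by
  have hea : (a * x) * a = a * (a * x) := by rw [mul_assoc, ← h5]
  have hee : IsIdempotentElem (a * x) := by
    show (a * x) * (a * x) = a * x
    rw [mul_assoc, ← mul_assoc x a x, h3]
  have hex : (a * x) * x = x := by rw [h5]; exact h3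
  have hca : Commute a (a * x) := hea.symm
  have hc1 : Commute a (1 - a * x) := (Commute.one_right a).sub_right hca
  have hid : IsIdempotentElem (1 - a * x) := hee.one_sub
  have hv : a ^ 2 * x = a * (a * x) := by rw [sq, mul_assoc]
  have hu' : a - a ^ 2 * x = a * (1 - a * x) := by rw [mul_sub, mul_one, hv]
  have hvk : ∀ m : ℕ, (a ^ 2 * x) ^ (m + 1) = a ^ (m + 1) * (a * x) := by
    intro m
    rw [hv, hca.mul_pow, hee.pow_succ_eq]
  have huk : ∀ m : ℕ, (a - a ^ 2 * x) ^ (m + 1) = a ^ (m + 1) * (1 - a * x) := by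
    intro m
    rw [hu', hc1.mul_pow, hid.pow_succ_eq]
  have hux : (a - a ^ 2 * x) * x = 0 := by
    rw [hu', mul_assoc, sub_mul, one_mul, hex, sub_self, mul_zero]
  have hxu : x * (a - a ^ 2 * x) = 0 := by
    rw [hu', ← mul_assoc, ← h5, mul_sub, mul_one, hee, sub_self]
  have hsum : ∀ m : ℕ, ((a - a ^ 2 * x) + x) ^ (m + 1)
      = (a - a ^ 2 * x) ^ (m + 1) + x ^ (m + 1) := by
    intro m
    induction m with
    | zero => simp
    | succ m ih =>
      have h1' : (a - a ^ 2 * x) ^ (m + 1) * x = 0 := by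
        rw [pow_succ, mul_assoc, hux, mul_zero]
      have h2' : x ^ (m + 1) * (a - a ^ 2 * x) = 0 := by
        rw [pow_succ, mul_assoc, hxu, mul_zero]
      rw [pow_succ, ih, add_mul, mul_add, mul_add, h1', h2', add_zero, zero_add,
        ← pow_succ, ← pow_succ]
  intro k hk
  obtain ⟨m, rfl⟩ : ∃ m, k = m + 1 := ⟨k - 1, (Nat.succ_pred_eq_of_pos hk).symm⟩
  have hz : a + x - a ^ 2 * x = (a - a ^ 2 * x) + x := by abel
  rw [hz, hsum, huk, hvk, mul_sub, mul_one]
  abel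
end

section
/- Let $a$ be an element of an associative ring $R$ with Drazin inverse $x$ of index at most $n$, and set $z = a + x - a^2 x$. Then for every positive integer $k$, $z^k$ is the complete inverse of $a^k$, i.e., $(a^k)^n z^k a^k = (a^k)^n$, $z^k a^k z^k - a^k z^k a^k = z^k - a^k$, and $a^k z^k = z^k a^k$. -/
private lemma split_pow {R : Type*} [CommRing R] (u v : R) (h : u * v = 0) :
    ∀ m : ℕ, (u + v) ^ (m + 1) = u ^ (m + 1) + v ^ (m + 1) := by
  intro m
  induction m with
  | zero => simp
  | succ m ih =>
    have hu : u ^ (m + 1) * v = 0 := by rw [pow_succ, mul_assoc, h, mul_zero]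
    have hv : v ^ (m + 1) * u = 0 := by
      rw [pow_succ, mul_assoc, mul_comm v u, h, mul_zero]
    rw [pow_succ, ih, pow_succ u, pow_succ v]
    linear_combination hu + hv

private lemma idem_pow {R : Type*} [Monoid R] (p : R) (h : p * p = p) :
    ∀ m : ℕ, p ^ (m + 1) = p := by
  intro m
  induction m with
  | zero => rw [pow_one]
  | succ m ih => rw [pow_succ, ih, h]

private lemma key_comm {R : Type*} [CommRing R] (A X : R) (n : ℕ) (hn : 0 < n)
    (hA : A ^ (n + 1) * X = A ^ n) (hX : A * X ^ 2 = X) (m : ℕ) :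
    (A ^ (m + 1)) ^ n * (A + X - A ^ 2 * X) ^ (m + 1) * A ^ (m + 1) = (A ^ (m + 1)) ^ n ∧
    (A + X - A ^ 2 * X) ^ (m + 1) * A ^ (m + 1) * (A + X - A ^ 2 * X) ^ (m + 1)
      - A ^ (m + 1) * (A + X - A ^ 2 * X) ^ (m + 1) * A ^ (m + 1)
      = (A + X - A ^ 2 * X) ^ (m + 1) - A ^ (m + 1) := by
  set Q := A - A ^ 2 * X with hQdef
  set S := A ^ 2 * X with hSdef
  have hXQ : X * Q = 0 := by rw [hQdef, hSdef]; linear_combination -(A * hX)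
  have hSQ : S * Q = 0 := by rw [hQdef, hSdef]; linear_combination -(A ^ 3 * hX)
  have hAnQ : A ^ n * Q = 0 := by rw [hQdef, hSdef]; linear_combination -(A * hA)
  have hXS : X * S = A * X := by rw [hSdef]; linear_combination A * hX
  have hpp : (A * X) * (A * X) = A * X := by linear_combination A * hX
  have hXQk : X ^ (m+1) * Q ^ (m+1) = 0 := by
    rw [← mul_pow, hXQ, zero_pow (Nat.succ_ne_zero m)]
  have hSQk : S ^ (m+1) * Q ^ (m+1) = 0 := by
    rw [← mul_pow, hSQ, zero_pow (Nat.succ_ne_zero m)]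
  have hAnQk : A ^ n * Q ^ (m+1) = 0 := by
    rw [pow_succ', ← mul_assoc, hAnQ, zero_mul]
  have hXSk : X ^ (m+1) * S ^ (m+1) = A * X := by
    rw [← mul_pow, hXS]; exact idem_pow _ hpp m
  have hpXk : (A * X) * X ^ (m+1) = X ^ (m+1) := by
    rw [pow_succ', ← mul_assoc]
    rw [show A * X * X = A * X ^ 2 by ring, hX]
  have hpSk : (A * X) * S ^ (m+1) = S ^ (m+1) := by
    rw [pow_succ', ← mul_assoc, hSdef]
    rw [show A * X * (A ^ 2 * X) = A ^ 2 * (A * X ^ 2) by ring, hX]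
  have hpQk : (A * X) * Q ^ (m+1) = 0 := by
    rw [pow_succ', ← mul_assoc]
    rw [show A * X * Q = -(A ^ 2 * (A * X ^ 2)) + A ^ 2 * X by rw [hQdef, hSdef]; ring, hX]
    ring
  have hZk : (A + X - A ^ 2 * X) ^ (m+1) = X ^ (m+1) + Q ^ (m+1) := by
    rw [show A + X - A ^ 2 * X = X + Q by rw [hQdef, hSdef]; ring]
    exact split_pow X Q hXQ m
  have hAk : A ^ (m+1) = S ^ (m+1) + Q ^ (m+1) := by
    conv_lhs => rw [show A = S + Q by rw [hQdef, hSdef]; ring]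
    exact split_pow S Q hSQ m
  constructor
  · rw [hZk, ← pow_mul, Nat.succ_mul, pow_add, hAk]
    linear_combination (A ^ (m*n) * A ^ n) * hXSk + A ^ (m*n) * hA
      + (A ^ (m*n) * A ^ n) * hXQk + (A ^ (m*n) * A ^ n) * hSQk
      + (A ^ (m*n) * Q ^ (m+1)) * hAnQk
  · rw [hZk, hAk]
    linear_combination (X ^ (m+1) - S ^ (m+1)) * (hXSk + hXQk + hSQk)
      + hpXk - hpSk + Q ^ (m+1) * hXQk - Q ^ (m+1) * hSQk

theorem complete_inverse_of_pow {R : Type*} [Ring R] (a x : R) (n : ℕ) (hn : 0 < n)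
    (h1 : a ^ n * x * a = a ^ n) (h3 : x * a * x = x) (h5 : a * x = x * a) :
    ∀ k : ℕ, 0 < k →
      (a ^ k) ^ n * (a + x - a ^ 2 * x) ^ k * a ^ k = (a ^ k) ^ n ∧
      (a + x - a ^ 2 * x) ^ k * a ^ k * (a + x - a ^ 2 * x) ^ k
        - a ^ k * (a + x - a ^ 2 * x) ^ k * a ^ k = (a + x - a ^ 2 * x) ^ k - a ^ k ∧
      a ^ k * (a + x - a ^ 2 * x) ^ k = (a + x - a ^ 2 * x) ^ k * a ^ k := by
  intro k hk
  obtain ⟨m, rfl⟩ := Nat.exists_eq_add_of_lt hk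
  rw [zero_add]
  have hcomm : ∀ y ∈ ({a, x} : Set R), ∀ z ∈ ({a, x} : Set R), y * z = z * y := by
    rintro y (rfl | rfl) z (rfl | rfl)
    · rfl
    · exact h5
    · exact h5.symm
    · rfl
  letI : CommRing (Subring.closure ({a, x} : Set R)) :=
    Subring.closureCommRingOfComm hcomm
  have ha : a ∈ Subring.closure ({a, x} : Set R) :=
    Subring.subset_closure (by simp)
  have hx : x ∈ Subring.closure ({a, x} : Set R) :=
    Subring.subset_closure (by simp)
  set A : Subring.closure ({a, x} : Set R) := ⟨a, ha⟩ with hAdef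
  set X : Subring.closure ({a, x} : Set R) := ⟨x, hx⟩ with hXdef
  have hA : A ^ (n + 1) * X = A ^ n := by
    apply Subtype.ext
    push_cast
    rw [pow_succ, mul_assoc, h5, ← mul_assoc, h1]
  have hX : A * X ^ 2 = X := by
    apply Subtype.ext
    push_cast
    rw [sq, ← mul_assoc, h5, h3]
  obtain ⟨e1, e2⟩ := key_comm A X n hn hA hX m
  have e1' := congrArg (Subtype.val) e1
  have e2' := congrArg (Subtype.val) e2
  push_cast at e1' e2'
  refine ⟨e1', e2', ?_⟩
  have hax : Commute a x := h5
  have e3 : Commute a (a + x - a ^ 2 * x) :=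
    ((Commute.refl a).add_right hax).sub_right (((Commute.refl a).pow_right 2).mul_right hax)
  exact e3.pow_pow (m + 1) (m + 1)
end

section
/- Let $a$ be an element of an associative ring $R$ with Drazin inverse $x$ of index at most $n$, and set $z = a + x - a^2 x$. Then $z^m = x^m$ for all integers $m \geq n$. -/
private lemma ann_pow_add {R : Type*} [Ring R] (u v : R) (huv : u * v = 0)
    (hvu : v * u = 0) : ∀ m : ℕ, 1 ≤ m → (u + v) ^ m = u ^ m + v ^ m := by
  intro m hm
  induction m, hm using Nat.le_induction with
  | base => simp
  | succ j hj ih =>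
    have hu : u ^ j * v = 0 := by
      obtain ⟨k, rfl⟩ := Nat.exists_eq_add_of_le hj
      rw [add_comm, pow_succ, mul_assoc, huv, mul_zero]
    have hv : v ^ j * u = 0 := by
      obtain ⟨k, rfl⟩ := Nat.exists_eq_add_of_le hj
      rw [add_comm, pow_succ, mul_assoc, hvu, mul_zero]
    calc (u + v) ^ (j + 1) = (u ^ j + v ^ j) * (u + v) := by rw [pow_succ, ih]
      _ = u ^ j * u + v ^ j * v + (u ^ j * v + v ^ j * u) := by noncomm_ring
      _ = u ^ (j + 1) + v ^ (j + 1) := by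
          rw [hu, hv, ← pow_succ, ← pow_succ, add_zero, add_zero]

theorem complete_inverse_pow_eq_drazin_pow {R : Type*} [Ring R] (a x : R) (n : ℕ) (hn : 0 < n)
    (h1 : a ^ n * x * a = a ^ n) (h3 : x * a * x = x) (h5 : a * x = x * a) :
    ∀ m : ℕ, n ≤ m → (a + x - a ^ 2 * x) ^ m = x ^ m := by
  set u := a - a ^ 2 * x with hu
  -- key multiplication facts
  have hx2 : x * (a ^ 2 * x) = x * a := by
    calc x * (a ^ 2 * x) = x * a * (a * x) := by noncomm_ring
      _ = x * a * (x * a) := by rw [h5]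
      _ = (x * a * x) * a := by noncomm_ring
      _ = x * a := by rw [h3]
  have hax2 : a ^ 2 * x * x = a * x := by
    calc a ^ 2 * x * x = a * (a * x * x) := by noncomm_ring
      _ = a * (x * a * x) := by rw [h5]
      _ = a * x := by rw [h3]
  have huv : u * x = 0 := by
    rw [hu, sub_mul, hax2, sub_self]
  have hvu : x * u = 0 := by
    rw [hu, mul_sub, hx2, ← h5, sub_self]
  have e1 : ∀ k : ℕ, a ^ k * (x * a) = a ^ (k + 1) * x := by
    intro k
    rw [← h5, ← mul_assoc, ← pow_succ]
  -- u ^ k = a ^ k - a ^ (k+1) * x for k ≥ 1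
  have hup : ∀ k : ℕ, 1 ≤ k → u ^ k = a ^ k - a ^ (k + 1) * x := by
    intro k hk
    induction k, hk using Nat.le_induction with
    | base => rw [pow_one, hu, pow_one]
    | succ j hj ih =>
      rw [pow_succ, ih, hu]
      have e2 : a ^ (j + 1) * x * (a ^ 2 * x) = a ^ (j + 1 + 1) * x := by
        rw [mul_assoc, hx2, e1 (j + 1)]
      have e3 : a ^ (j + 1) * x * a = a ^ (j + 1 + 1) * x := by
        rw [mul_assoc, e1 (j + 1)]
      calc (a ^ j - a ^ (j + 1) * x) * (a - a ^ 2 * x)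
          = a ^ j * a - a ^ j * (a ^ 2 * x) - a ^ (j + 1) * x * a
            + a ^ (j + 1) * x * (a ^ 2 * x) := by noncomm_ring
        _ = a ^ (j + 1) - a ^ j * (a ^ 2 * x) - a ^ (j + 1 + 1) * x
            + a ^ (j + 1 + 1) * x := by rw [e2, e3, ← pow_succ]
        _ = a ^ (j + 1) - a ^ (j + 1 + 1) * x := by
            have : a ^ j * (a ^ 2 * x) = a ^ (j + 1 + 1) * x := by
              rw [← mul_assoc, ← pow_add]
            rw [this]; abel
  intro m hm
  have hm1 : 1 ≤ m := le_trans hn hm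
  have hkey : a ^ (m + 1) * x = a ^ m := by
    have hn1 : a ^ (n + 1) * x = a ^ n := by
      rw [pow_succ, mul_assoc, h5, ← mul_assoc, h1]
    obtain ⟨j, rfl⟩ := Nat.exists_eq_add_of_le hm
    calc a ^ (n + j + 1) * x = a ^ j * (a ^ (n + 1) * x) := by
          rw [← mul_assoc, ← pow_add]
          have : n + j + 1 = j + (n + 1) := by omega
          rw [this]
      _ = a ^ j * a ^ n := by rw [hn1]
      _ = a ^ (n + j) := by rw [← pow_add, add_comm]
  have hzero : u ^ m = 0 := by rw [hup m hm1, hkey, sub_self]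
  have hsplit : a + x - a ^ 2 * x = u + x := by rw [hu]; abel
  rw [hsplit, ann_pow_add u x huv hvu m hm1, hzero, zero_add]
end

section
/- Let $a$ be an element of an associative ring $R$ with Drazin inverse $x$ of index at most $n$, and set $v = a^2 x$ and $z = a + x - v$. Then $v$ is a Drazin inverse of $z$ of index at most $n$: $z^n v z = z^n$, $vzv = v$, and $zv = vz$. -/
theorem v_drazin_inverse_of_z {R : Type*} [Ring R] (a x : R) (n : ℕ) (hn : 0 < n)
    (h1 : a ^ n * x * a = a ^ n) (h3 : x * a * x = x) (h5 : a * x = x * a) :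
    (a + x - a ^ 2 * x) ^ n * (a ^ 2 * x) * (a + x - a ^ 2 * x) = (a + x - a ^ 2 * x) ^ n ∧
      (a ^ 2 * x) * (a + x - a ^ 2 * x) * (a ^ 2 * x) = a ^ 2 * x ∧
      (a + x - a ^ 2 * x) * (a ^ 2 * x) = (a ^ 2 * x) * (a + x - a ^ 2 * x) := by
  obtain ⟨m, rfl⟩ : ∃ m, n = m + 1 := ⟨n - 1, (Nat.succ_pred_eq_of_pos hn).symm⟩
  have hc : Commute a x := h5
  have hxa2 : x * a ^ 2 = a ^ 2 * x := ((hc.symm).pow_right 2).eq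
  have hax2 : a * x * x = x := by rw [h5, h3]
  have haxx : a * (x * x) = x := by rw [← mul_assoc, hax2]
  have key : a ^ 2 * x * x = a * x := by
    rw [sq, mul_assoc a a x, mul_assoc a (a * x) x, hax2]
  set u := a - a ^ 2 * x with hu
  have hux : u * x = 0 := by rw [hu, sub_mul, key, sub_self]
  have hxu : x * u = 0 := by
    rw [hu, mul_sub, ← mul_assoc, hxa2, key, ← h5, sub_self]
  have hu2 : u * u = a * u := by
    nth_rewrite 1 [hu]
    rw [sub_mul, mul_assoc, hxu, mul_zero, sub_zero]
  have hupow : ∀ k : ℕ, u ^ (k + 1) = a ^ k * u := by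
    intro k
    induction k with
    | zero => simp
    | succ k ih =>
      rw [pow_succ, ih, mul_assoc, hu2, ← mul_assoc, ← pow_succ]
  have hk2 : a ^ (m + 2) * x = a ^ (m + 1) := by
    rw [pow_succ, mul_assoc, h5, ← mul_assoc, h1]
  have hun : u ^ (m + 1) = 0 := by
    rw [hupow m, hu, mul_sub, ← pow_succ, ← mul_assoc, ← pow_add, hk2, sub_self]
  have hz : a + x - a ^ 2 * x = u + x := by rw [hu]; abel
  have hzpow : ∀ k : ℕ, (u + x) ^ (k + 1) = u ^ (k + 1) + x ^ (k + 1) := by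
    intro k
    induction k with
    | zero => simp
    | succ k ih =>
      have e1 : u ^ (k + 1) * x = 0 := by rw [pow_succ, mul_assoc, hux, mul_zero]
      have e2 : x ^ (k + 1) * u = 0 := by rw [pow_succ, mul_assoc, hxu, mul_zero]
      rw [pow_succ, ih, add_mul, mul_add, mul_add, e1, e2, add_zero, zero_add,
        ← pow_succ, ← pow_succ]
  have hzn : (a + x - a ^ 2 * x) ^ (m + 1) = x ^ (m + 1) := by
    rw [hz, hzpow, hun, zero_add]
  have t3 : a ^ 2 * x * (a ^ 2 * x) = a ^ 3 * x := by
    rw [← mul_assoc, mul_assoc (a ^ 2) x (a ^ 2), hxa2, ← mul_assoc, ← pow_add,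
      show (2 + 2 : ℕ) = 3 + 1 from rfl, pow_succ, mul_assoc, mul_assoc, haxx]
  have hvz : (a ^ 2 * x) * (a + x - a ^ 2 * x) = a * x := by
    rw [mul_sub, mul_add]
    have t1 : a ^ 2 * x * a = a ^ 3 * x := by
      rw [mul_assoc, ← h5, ← mul_assoc, ← pow_succ]
    rw [t1, key, t3]
    abel
  have hzv : (a + x - a ^ 2 * x) * (a ^ 2 * x) = a * x := by
    rw [sub_mul, add_mul]
    have t1 : a * (a ^ 2 * x) = a ^ 3 * x := by
      rw [← mul_assoc, ← pow_succ']
    have t2 : x * (a ^ 2 * x) = a * x := by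
      rw [← mul_assoc, hxa2, key]
    rw [t1, t2, t3]
    abel
  refine ⟨?_, ?_, ?_⟩
  · rw [mul_assoc, hvz, hzn, pow_succ, mul_assoc, ← mul_assoc x a x, h3, ← pow_succ]
  · rw [mul_assoc, hzv, mul_assoc, ← mul_assoc x a x, h3]
  · rw [hvz, hzv]
end

section
/- Let $a$ be an element of an associative ring $R$ with Drazin inverse $x$ of index at most $n$, and set $v = a^2 x$. Then $v$ is a complete inverse of $x$: $x^n v x = x^n$, $vxv - xvx = v - x$, and $xv = vx$. -/
theorem v_complete_inverse_of_x {R : Type*} [Ring R] (a x : R) (n : ℕ) (hn : 0 < n)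
    (h1 : a ^ n * x * a = a ^ n) (h3 : x * a * x = x) (h5 : a * x = x * a) :
    x ^ n * (a ^ 2 * x) * x = x ^ n ∧
      (a ^ 2 * x) * x * (a ^ 2 * x) - x * (a ^ 2 * x) * x = (a ^ 2 * x) - x ∧
      x * (a ^ 2 * x) = (a ^ 2 * x) * x := by
  have hc : Commute a x := h5
  have key : x * (a ^ 2 * x) * x = x := by
    calc x * (a ^ 2 * x) * x = x * a * (a * x) * x := by noncomm_ring
      _ = x * a * (x * a) * x := by rw [h5]
      _ = (x * a * x) * (a * x) := by noncomm_ring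
      _ = x * (a * x) := by rw [h3]
      _ = x * a * x := by rw [mul_assoc]
      _ = x := h3
  have hcx : Commute (a ^ 2) (x * x) := (hc.pow_left 2).mul_right (hc.pow_left 2)
  have hv : (a ^ 2 * x) * x * (a ^ 2 * x) = a ^ 2 * x := by
    calc (a ^ 2 * x) * x * (a ^ 2 * x) = a ^ 2 * ((x * x) * a ^ 2) * x := by noncomm_ring
      _ = a ^ 2 * (x * (x * a ^ 2)) * x := by noncomm_ring
      _ = a ^ 2 * (x * (a ^ 2 * x)) * x := by rw [(hc.pow_left 2).symm.eq]
      _ = a ^ 2 * (x * (a ^ 2 * x) * x) := by noncomm_ring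
      _ = a ^ 2 * x := by rw [key]
  refine ⟨?_, by rw [hv, key], ((hc.pow_left 2).symm.mul_right (Commute.refl x)).eq⟩
  obtain ⟨m, rfl⟩ := Nat.exists_eq_succ_of_ne_zero hn.ne'
  calc x ^ (m + 1) * (a ^ 2 * x) * x = x ^ m * (x * (a ^ 2 * x) * x) := by
        rw [pow_succ]; noncomm_ring
    _ = x ^ (m + 1) := by rw [key, ← pow_succ]
end

section
/- Let $a$ be an element of an associative ring $R$ with Drazin inverse $x$ of index at most $n$, and set $z = a + x - a^2 x$. Then $a$ is a complete inverse of $z$: $z^n a z = z^n$, $aza - zaz = a - z$, and $za = az$. -/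
theorem a_complete_inverse_of_z {R : Type*} [Ring R] (a x : R) (n : ℕ) (hn : 0 < n)
    (h1 : a ^ n * x * a = a ^ n) (h3 : x * a * x = x) (h5 : a * x = x * a) :
    (a + x - a ^ 2 * x) ^ n * a * (a + x - a ^ 2 * x) = (a + x - a ^ 2 * x) ^ n ∧
      a * (a + x - a ^ 2 * x) * a - (a + x - a ^ 2 * x) * a * (a + x - a ^ 2 * x)
        = a - (a + x - a ^ 2 * x) ∧
      (a + x - a ^ 2 * x) * a = a * (a + x - a ^ 2 * x) := by
  set z := a + x - a ^ 2 * x with hz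
  have hc : Commute a x := h5
  have hcz : Commute a z := by
    have h₁ : Commute a (a + x) := (Commute.refl a).add_right hc
    have h₂ : Commute a (a ^ 2 * x) := (((Commute.refl a).pow_right 2).mul_right hc)
    exact h₁.sub_right h₂
  -- z * a * x = x
  have h4 : a ^ 2 * x * a * x = a ^ 2 * x := by
    calc a ^ 2 * x * a * x = a ^ 2 * (x * a * x) := by noncomm_ring
    _ = a ^ 2 * x := by rw [h3]
  have hzax : z * a * x = x := by
    calc z * a * x = a ^ 2 * x + x * a * x - a ^ 2 * x * a * x := by rw [hz]; noncomm_ring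
    _ = a ^ 2 * x + x - a ^ 2 * x := by rw [h3, h4]
    _ = x := by noncomm_ring
  -- z * (1 - a*x) = a * (1 - a*x)
  have hstep : z * (1 - a * x) = a * (1 - a * x) := by
    have hzx : z * (a * x) = x := by rw [← mul_assoc]; exact hzax
    calc z * (1 - a * x) = z - z * (a * x) := by noncomm_ring
    _ = z - x := by rw [hzx]
    _ = a - a ^ 2 * x := by rw [hz]; noncomm_ring
    _ = a * (1 - a * x) := by noncomm_ring
  -- z^m * (1 - a*x) = a^m * (1 - a*x)
  have hpow : ∀ m : ℕ, z ^ m * (1 - a * x) = a ^ m * (1 - a * x) := by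
    intro m
    induction m with
    | zero => simp
    | succ k ih =>
      calc z ^ (k + 1) * (1 - a * x) = z ^ k * (z * (1 - a * x)) := by
            rw [pow_succ, mul_assoc]
      _ = z ^ k * (a * (1 - a * x)) := by rw [hstep]
      _ = z ^ k * a * (1 - a * x) := by rw [mul_assoc]
      _ = a * z ^ k * (1 - a * x) := by rw [(hcz.pow_right k).eq]
      _ = a * (z ^ k * (1 - a * x)) := by rw [mul_assoc]
      _ = a * (a ^ k * (1 - a * x)) := by rw [ih]
      _ = a * a ^ k * (1 - a * x) := by rw [mul_assoc]
      _ = a ^ (k + 1) * (1 - a * x) := by rw [pow_succ']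
  -- a^n * (1 - a*x) = 0
  have han : a ^ n * (1 - a * x) = 0 := by
    have : a ^ n * (a * x) = a ^ n := by
      calc a ^ n * (a * x) = a ^ n * (x * a) := by rw [h5]
      _ = a ^ n * x * a := by rw [mul_assoc]
      _ = a ^ n := h1
    calc a ^ n * (1 - a * x) = a ^ n - a ^ n * (a * x) := by noncomm_ring
    _ = a ^ n - a ^ n := by rw [this]
    _ = 0 := sub_self _
  -- z^n * (a*x) = z^n
  have hzn : z ^ n * (a * x) = z ^ n := by
    have h0 : z ^ n * (1 - a * x) = 0 := by rw [hpow n, han]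
    rw [mul_sub, mul_one] at h0
    exact (sub_eq_zero.mp h0).symm
  -- a * (a^2 * x) = (a * x) * a^2
  have h6 : a * (a ^ 2 * x) = a * x * a ^ 2 := by
    rw [mul_assoc a x (a ^ 2), (hc.symm.pow_right 2).eq]
  refine ⟨?_, ?_, hcz.eq.symm⟩
  · -- z^n * a * z = z^n
    have key : z ^ n * (a * (a ^ 2 * x)) = z ^ n * a ^ 2 := by
      calc z ^ n * (a * (a ^ 2 * x)) = z ^ n * (a * x * a ^ 2) := by rw [h6]
      _ = z ^ n * (a * x) * a ^ 2 := by rw [← mul_assoc]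
      _ = z ^ n * a ^ 2 := by rw [hzn]
    calc z ^ n * a * z = z ^ n * (a * a) + z ^ n * (a * x) - z ^ n * (a * (a ^ 2 * x)) := by
          rw [hz]; noncomm_ring
    _ = z ^ n * (a * a) + z ^ n - z ^ n * a ^ 2 := by rw [hzn, key]
    _ = z ^ n := by noncomm_ring
  · -- a*z*a - z*a*z = a - z
    have hza2 : z * a * (a ^ 2 * x) = x * a ^ 2 := by
      calc z * a * (a ^ 2 * x) = z * (a * (a ^ 2 * x)) := by rw [mul_assoc]
      _ = z * (a * x * a ^ 2) := by rw [h6]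
      _ = z * (a * x) * a ^ 2 := by rw [← mul_assoc]
      _ = z * a * x * a ^ 2 := by rw [← mul_assoc]
      _ = x * a ^ 2 := by rw [hzax]
    have hzaz : z * a * z = z * (a * a) + x - x * a ^ 2 := by
      calc z * a * z = z * a * a + z * a * x - z * a * (a ^ 2 * x) := by
            rw [hz]; noncomm_ring
      _ = z * a * a + x - x * a ^ 2 := by rw [hzax, hza2]
      _ = z * (a * a) + x - x * a ^ 2 := by rw [mul_assoc]
    have haza : a * z * a = z * (a * a) := by
      rw [hcz.eq, mul_assoc]
    rw [haza, hzaz]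
    have hxa2 : x * a ^ 2 = a ^ 2 * x := (hc.symm.pow_right 2).eq
    rw [hz]
    rw [hxa2]
    noncomm_ring
end

section
/- Let $a$ be an element of an associative ring $R$ with Drazin inverse $x$ of index at most $n$, and set $z = a + x - a^2 x$. If $z$ is invertible, then $a$ is invertible. -/
set_option maxHeartbeats 1000000 in
theorem unit_of_complete_inverse_unit {R : Type*} [Ring R] (a x : R) (n : ℕ) (hn : 0 < n)
    (h1 : a ^ n * x * a = a ^ n) (h3 : x * a * x = x) (h5 : a * x = x * a)
    (hz : IsUnit (a + x - a ^ 2 * x)) : IsUnit a := by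
  -- work inside the commutative subring generated by a and x
  have hcomm : ∀ p ∈ ({a, x} : Set R), ∀ q ∈ ({a, x} : Set R), p * q = q * p := by
    rintro p (rfl | rfl) q (rfl | rfl) <;> simp [h5]
  letI : CommRing (Subring.closure ({a, x} : Set R)) := Subring.closureCommRingOfComm hcomm
  have haS : a ∈ Subring.closure ({a, x} : Set R) := Subring.subset_closure (by simp)
  have hxS : x ∈ Subring.closure ({a, x} : Set R) := Subring.subset_closure (by simp)
  set A : Subring.closure ({a, x} : Set R) := ⟨a, haS⟩ with hA
  set X : Subring.closure ({a, x} : Set R) := ⟨x, hxS⟩ with hX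
  have key : A * X ^ 2 = X := by
    apply Subtype.ext
    push_cast [hA, hX]
    have h2 : a * (x * x) = x * a * x := by rw [← mul_assoc, h5]
    rw [pow_two, h2, h3]
  have h1' : A ^ n * X * A = A ^ n := by
    apply Subtype.ext
    push_cast [hA, hX]
    exact h1
  -- the key identity z ^ (m+1) = a^(m+1) - a^(m+2) * x + x^(m+1)
  have main : ∀ m : ℕ, (A + X - A ^ 2 * X) ^ (m + 1)
      = A ^ (m + 1) - A ^ (m + 2) * X + X ^ (m + 1) := by
    intro m
    induction m with
    | zero => ring
    | succ m ih =>
        have hstep : (A + X - A ^ 2 * X) ^ (m + 2)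
            = (A + X - A ^ 2 * X) * (A ^ (m + 1) - A ^ (m + 2) * X + X ^ (m + 1)) := by
          rw [← ih, ← pow_succ']
        rw [hstep]
        linear_combination (A ^ (m + 3) - A ^ (m + 1) - A * X ^ m) * key
  -- hence z^n = x^n
  obtain ⟨m, rfl⟩ : ∃ m, n = m + 1 := ⟨n - 1, (Nat.succ_pred_eq_of_pos hn).symm⟩
  have hzx : (A + X - A ^ 2 * X) ^ (m + 1) = X ^ (m + 1) := by
    rw [main m]
    have hred : A ^ (m + 2) * X = A ^ (m + 1) := by
      calc A ^ (m + 2) * X = A ^ (m + 1) * X * A := by ring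
        _ = A ^ (m + 1) := h1'
    rw [hred]; ring
  have hzxR : (a + x - a ^ 2 * x) ^ (m + 1) = x ^ (m + 1) := by
    have h := congrArg (Subtype.val) hzx
    push_cast [hA, hX] at h
    exact h
  -- so x^n is a unit, hence x is a unit
  have hxu : IsUnit x := by
    rw [← isUnit_pow_iff (Nat.succ_ne_zero m), ← hzxR]
    exact hz.pow _
  -- from x*a*x = x and x a unit, a*x = 1 and x*a = 1
  have hax1 : a * x = 1 := by
    have h := hxu
    have : x * (a * x) = x * 1 := by rw [mul_one, ← mul_assoc, h3]
    exact hxu.mul_left_cancel this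
  have hxa1 : x * a = 1 := by rw [← h5, hax1]
  exact isUnit_iff_exists.mpr ⟨x, hax1, hxa1⟩
end

section
/- Let $a$ be an element of an associative ring $R$ admitting a Drazin inverse $x$ of index at most $n$. If the element $v^n$ (where $v = a^2 x$) is expressible as a polynomial $H$ evaluated at $x^n$, then with $z = a + x - v$ we have $x = z^{n+1} H(z^n)$; in particular, the Drazin inverse $x$ is a polynomial in the complete inverse $z$. -/
theorem drazin_polynomial_in_complete {R : Type*} [Ring R] (a x : R) (n : ℕ) (hn : 0 < n)
    (h1 : a ^ n * x * a = a ^ n) (h3 : x * a * x = x) (h5 : a * x = x * a)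
    (H : Polynomial R) (hH : ∀ i, Commute (H.coeff i) a)
    (hv : Polynomial.eval₂ (RingHom.id R) (x ^ n) H = (a ^ 2 * x) ^ n) :
    x = (a + x - a ^ 2 * x) ^ (n + 1)
        * Polynomial.eval₂ (RingHom.id R) ((a + x - a ^ 2 * x) ^ n) H := by
  obtain ⟨m, rfl⟩ : ∃ m, n = m + 1 := ⟨n - 1, (Nat.succ_pred_eq_of_pos hn).symm⟩
  have hax2 : a * x * x = x := by rw [h5, h3]
  have hxxa : x * x * a = x := by rw [mul_assoc, ← h5, ← mul_assoc, h3]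
  have hane : a ^ (m + 1) * (a * x) = a ^ (m + 1) := by rw [h5, ← mul_assoc, h1]
  have h7 : a ^ 2 * x * x = a * x := by
    rw [sq, mul_assoc a a x, mul_assoc a (a * x) x, hax2]
  have h8 : x * (a ^ 2 * x) = x * a := by
    rw [sq, ← mul_assoc, ← mul_assoc, ← h5, mul_assoc a x a, mul_assoc a (x * a) x, h3, h5]
  set u := a - a ^ 2 * x with hu
  have hux : u * x = 0 := by rw [hu, sub_mul, h7, sub_self]
  have hxu : x * u = 0 := by rw [hu, mul_sub, h8, sub_self]
  have hfa : (1 - a * x) * a = a * (1 - a * x) := by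
    rw [sub_mul, mul_sub, one_mul, mul_one, mul_assoc, ← h5]
  have hfidem : (1 - a * x) * (1 - a * x) = 1 - a * x := by
    have hp : (a * x) * (a * x) = a * x := by
      rw [mul_assoc, ← mul_assoc x a x, h3]
    simp only [mul_sub, sub_mul, one_mul, mul_one, hp]
    abel
  have hfpow : ∀ k, (1 - a * x) ^ (k + 1) = 1 - a * x := by
    intro k
    induction k with
    | zero => rw [pow_one]
    | succ k ih => rw [pow_succ, ih, hfidem]
  have huf : u = a * (1 - a * x) := by
    rw [hu, mul_sub, mul_one, ← mul_assoc, ← sq]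
  have hupow : ∀ k, u ^ (k + 1) = a ^ (k + 1) * (1 - a * x) := by
    intro k
    have hc : Commute a (1 - a * x) := hfa.symm
    rw [huf, hc.mul_pow, hfpow]
  have hun : u ^ (m + 1) = 0 := by
    rw [hupow, mul_sub, mul_one, hane, sub_self]
  have hux' : ∀ k, u ^ (k + 1) * x = 0 := fun k => by
    rw [pow_succ, mul_assoc, hux, mul_zero]
  have hxu' : ∀ k, x ^ (k + 1) * u = 0 := fun k => by
    rw [pow_succ, mul_assoc, hxu, mul_zero]
  have hz : a + x - a ^ 2 * x = u + x := by rw [hu]; abel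
  have hzpow : ∀ k, (u + x) ^ (k + 1) = u ^ (k + 1) + x ^ (k + 1) := by
    intro k
    induction k with
    | zero => rw [pow_one, pow_one, pow_one]
    | succ k ih =>
      rw [pow_succ, ih, add_mul, mul_add, mul_add, ← pow_succ, ← pow_succ,
        hux' k, hxu' k, add_zero, zero_add]
  have hzn : (u + x) ^ (m + 1) = x ^ (m + 1) := by
    rw [hzpow, hun, zero_add]
  have hzn1 : (u + x) ^ (m + 1 + 1) = x ^ (m + 1 + 1) := by
    rw [hzpow, pow_succ, hun, zero_mul, zero_add]
  have hkey : ∀ k, x ^ (k + 1) * (a ^ 2 * x) ^ k = x := by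
    intro k
    induction k with
    | zero => rw [pow_one, pow_zero, mul_one]
    | succ k ih =>
      rw [pow_succ' x, pow_succ (a ^ 2 * x), mul_assoc, ← mul_assoc (x ^ (k + 1)), ih,
        h8, ← mul_assoc, hxxa]
  rw [hz, hzn, hzn1, hv]
  exact (hkey (m + 1)).symm
end

section
/- Let $A$ be a square matrix over a field $F$ whose Jordan decomposition is $A = P \begin{pmatrix} D & 0 \\ 0 & N \end{pmatrix} P^{-1}$, where $P$ is invertible, $D$ is invertible, and $N$ is nilpotent with $N^p = 0$. Then the matrix $A_c = P \begin{pmatrix} D^{-1} & 0 \\ 0 & N \end{pmatrix} P^{-1}$ satisfies $A^p A_c A = A^p$, $A_c A A_c - A A_c A = A_c - A$, and $A A_c = A_c A$, and $A_c$ is the unique matrix with these properties. -/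
open Matrix

private lemma fromBlocks_sub' {α n m o l : Type*} [SubtractionMonoid α]
    (A A' : Matrix n l α) (B B' : Matrix n m α) (C C' : Matrix o l α) (D D' : Matrix o m α) :
    Matrix.fromBlocks A B C D - Matrix.fromBlocks A' B' C' D'
      = Matrix.fromBlocks (A - A') (B - B') (C - C') (D - D') := by
  ext i j
  rcases i with i | i <;> rcases j with j | j <;>
    simp [Matrix.fromBlocks, Matrix.sub_apply]

theorem matrix_complete_inverse {F : Type*} [Field F] {r s : ℕ} (p : ℕ) (hp : 0 < p)
    (P : Matrix (Fin r ⊕ Fin s) (Fin r ⊕ Fin s) F)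
    (D : Matrix (Fin r) (Fin r) F) (N : Matrix (Fin s) (Fin s) F)
    (hP : IsUnit P) (hD : IsUnit D) (hN : N ^ p = 0)
    (A : Matrix (Fin r ⊕ Fin s) (Fin r ⊕ Fin s) F)
    (hA : A = P * Matrix.fromBlocks D 0 0 N * P⁻¹) :
    (A ^ p * (P * Matrix.fromBlocks D⁻¹ 0 0 N * P⁻¹) * A = A ^ p ∧
      (P * Matrix.fromBlocks D⁻¹ 0 0 N * P⁻¹) * A * (P * Matrix.fromBlocks D⁻¹ 0 0 N * P⁻¹)
        - A * (P * Matrix.fromBlocks D⁻¹ 0 0 N * P⁻¹) * A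
        = (P * Matrix.fromBlocks D⁻¹ 0 0 N * P⁻¹) - A ∧
      A * (P * Matrix.fromBlocks D⁻¹ 0 0 N * P⁻¹) = (P * Matrix.fromBlocks D⁻¹ 0 0 N * P⁻¹) * A)
    ∧ ∀ W : Matrix (Fin r ⊕ Fin s) (Fin r ⊕ Fin s) F,
        (A ^ p * W * A = A ^ p ∧ W * A * W - A * W * A = W - A ∧ A * W = W * A) →
        W = P * Matrix.fromBlocks D⁻¹ 0 0 N * P⁻¹ := by
  have hPd : IsUnit P.det := (Matrix.isUnit_iff_isUnit_det P).mp hP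
  have h1 : P * P⁻¹ = 1 := Matrix.mul_nonsing_inv P hPd
  have h2 : P⁻¹ * P = 1 := Matrix.nonsing_inv_mul P hPd
  have h2' : ∀ Z : Matrix (Fin r ⊕ Fin s) (Fin r ⊕ Fin s) F, P⁻¹ * (P * Z) = Z := fun Z => by
    rw [← mul_assoc, h2, one_mul]
  have hDd : IsUnit D.det := (Matrix.isUnit_iff_isUnit_det D).mp hD
  have hD1 : D * D⁻¹ = 1 := Matrix.mul_nonsing_inv D hDd
  have hD2 : D⁻¹ * D = 1 := Matrix.nonsing_inv_mul D hDd
  have hDp : IsUnit ((D ^ p).det) := (Matrix.isUnit_iff_isUnit_det _).mp (hD.pow p)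
  have hDp1 : D ^ p * (D ^ p)⁻¹ = 1 := Matrix.mul_nonsing_inv _ hDp
  have hDp2 : (D ^ p)⁻¹ * (D ^ p) = 1 := Matrix.nonsing_inv_mul _ hDp
  set B := Matrix.fromBlocks D 0 0 N with hB
  set Bc := Matrix.fromBlocks D⁻¹ 0 0 N with hBc
  have conj : ∀ X Y : Matrix (Fin r ⊕ Fin s) (Fin r ⊕ Fin s) F,
      (P * X * P⁻¹) * (P * Y * P⁻¹) = P * (X * Y) * P⁻¹ := fun X Y => by
    simp only [mul_assoc, h2']
  have cancelconj : ∀ X Y : Matrix (Fin r ⊕ Fin s) (Fin r ⊕ Fin s) F,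
      P * X * P⁻¹ = P * Y * P⁻¹ → X = Y := by
    intro X Y h
    have := congrArg (fun Z => P⁻¹ * Z * P) h
    simpa only [mul_assoc, h2', h2, mul_one] using this
  have conjpow : ∀ k : ℕ, (P * B * P⁻¹) ^ k = P * B ^ k * P⁻¹ := by
    intro k
    induction k with
    | zero => simp [h1]
    | succ n ih => rw [pow_succ, pow_succ, ih, conj]
  have Bpow : ∀ k : ℕ, B ^ k = Matrix.fromBlocks (D ^ k) 0 0 (N ^ k) := by
    intro k
    induction k with
    | zero => simp [Matrix.fromBlocks_one]
    | succ n ih => rw [pow_succ, pow_succ, ih, hB]; simp [Matrix.fromBlocks_multiply, pow_succ]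
  have hAp : A ^ p = P * Matrix.fromBlocks (D ^ p) 0 0 0 * P⁻¹ := by
    rw [hA, conjpow, Bpow, hN]
  constructor
  · refine ⟨?_, ?_, ?_⟩
    · rw [hAp, hA, conj, conj]
      congr 1
      rw [hB, hBc]
      simp only [Matrix.fromBlocks_multiply, Matrix.mul_zero, Matrix.zero_mul, add_zero, zero_add,
        mul_zero, zero_mul]
      rw [mul_assoc (D ^ p) D⁻¹ D, hD2, mul_one]
    · rw [hA, conj, conj, conj, conj]
      have hsub : P * (Bc * B * Bc) * P⁻¹ - P * (B * Bc * B) * P⁻¹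
          = P * (Bc * B * Bc - B * Bc * B) * P⁻¹ := by
        rw [Matrix.mul_sub, Matrix.sub_mul]
      rw [hsub]
      have key : Bc * B * Bc - B * Bc * B = Bc - B := by
        rw [hB, hBc]
        simp only [Matrix.fromBlocks_multiply, Matrix.mul_zero, Matrix.zero_mul, add_zero,
          zero_add, mul_zero, zero_mul, hD1, hD2, Matrix.one_mul, Matrix.mul_one, one_mul, mul_one]
        rw [fromBlocks_sub', fromBlocks_sub']
        simp
      rw [key, Matrix.mul_sub, Matrix.sub_mul]
    · rw [hA, conj, conj]
      congr 1
      rw [hB, hBc]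
      simp only [Matrix.fromBlocks_multiply, Matrix.mul_zero, Matrix.zero_mul, add_zero,
        zero_add, mul_zero, zero_mul, hD1, hD2]
  · rintro W ⟨w1, w2, w3⟩
    obtain ⟨V, hW⟩ : ∃ V, W = P * V * P⁻¹ := by
      refine ⟨P⁻¹ * W * P, ?_⟩
      rw [show P * (P⁻¹ * W * P) * P⁻¹ = (P * P⁻¹) * W * (P * P⁻¹) by noncomm_ring, h1,
        Matrix.one_mul, Matrix.mul_one]
    have hApB : A ^ p = P * B ^ p * P⁻¹ := by rw [hA, conjpow]
    -- translate the three conditions to V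
    have c3 : B * V = V * B := by
      apply cancelconj
      have t : (P * B * P⁻¹) * (P * V * P⁻¹) = (P * V * P⁻¹) * (P * B * P⁻¹) := by
        rw [← hA, ← hW]; exact w3
      rw [conj, conj] at t
      exact t
    have c1 : B ^ p * V * B = B ^ p := by
      apply cancelconj
      have t : (P * B ^ p * P⁻¹) * (P * V * P⁻¹) * (P * B * P⁻¹) = P * B ^ p * P⁻¹ := by
        rw [← hApB, ← hW, ← hA]; exact w1
      rw [conj, conj] at t
      exact t
    have c2 : V * B * V - B * V * B = V - B := by
      apply cancelconj
      have t : (P * V * P⁻¹) * (P * B * P⁻¹) * (P * V * P⁻¹)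
          - (P * B * P⁻¹) * (P * V * P⁻¹) * (P * B * P⁻¹) = P * V * P⁻¹ - P * B * P⁻¹ := by
        rw [← hA, ← hW]; exact w2
      rw [conj, conj, conj, conj] at t
      rw [show P * (V - B) * P⁻¹ = P * V * P⁻¹ - P * B * P⁻¹ by
        rw [Matrix.mul_sub, Matrix.sub_mul]]
      rw [show P * (V * B * V - B * V * B) * P⁻¹
          = P * (V * B * V) * P⁻¹ - P * (B * V * B) * P⁻¹ by
        rw [Matrix.mul_sub, Matrix.sub_mul]]
      exact t
    -- block decomposition of V
    set V11 := V.toBlocks₁₁ with hV11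
    set V12 := V.toBlocks₁₂ with hV12
    set V21 := V.toBlocks₂₁ with hV21
    set V22 := V.toBlocks₂₂ with hV22
    have hV : V = Matrix.fromBlocks V11 V12 V21 V22 := (Matrix.fromBlocks_toBlocks V).symm
    -- commutation relations blockwise
    have c3' : Matrix.fromBlocks (D * V11) (D * V12) (N * V21) (N * V22)
        = Matrix.fromBlocks (V11 * D) (V12 * N) (V21 * D) (V22 * N) := by
      have := c3
      rw [hV, hB] at this
      simpa only [Matrix.fromBlocks_multiply, Matrix.mul_zero, Matrix.zero_mul, add_zero,
        zero_add] using this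
    obtain ⟨e11, e12, e21, e22⟩ := Matrix.fromBlocks_inj.mp c3'
    -- off-diagonal blocks vanish
    have hV12z : V12 = 0 := by
      have e12p : ∀ k : ℕ, D ^ k * V12 = V12 * N ^ k := by
        intro k
        induction k with
        | zero => simp
        | succ n ih =>
          rw [pow_succ, pow_succ, Matrix.mul_assoc, e12, ← Matrix.mul_assoc, ih,
            Matrix.mul_assoc]
      have hz : D ^ p * V12 = 0 := by rw [e12p p, hN, Matrix.mul_zero]
      calc V12 = (D ^ p)⁻¹ * (D ^ p * V12) := by rw [← Matrix.mul_assoc, hDp2, Matrix.one_mul]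
        _ = 0 := by rw [hz, Matrix.mul_zero]
    have hV21z : V21 = 0 := by
      have e21p : ∀ k : ℕ, N ^ k * V21 = V21 * D ^ k := by
        intro k
        induction k with
        | zero => simp
        | succ n ih =>
          rw [pow_succ, pow_succ, Matrix.mul_assoc, e21, ← Matrix.mul_assoc, ih,
            Matrix.mul_assoc]
      have hz : V21 * D ^ p = 0 := by rw [← e21p p, hN, Matrix.zero_mul]
      calc V21 = (V21 * D ^ p) * (D ^ p)⁻¹ := by rw [Matrix.mul_assoc, hDp1, Matrix.mul_one]
        _ = 0 := by rw [hz, Matrix.zero_mul]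
    -- top-left block is D⁻¹
    have c1' : Matrix.fromBlocks (D ^ p * V11 * D) (D ^ p * V12 * N)
          (0 : Matrix (Fin s) (Fin r) F) (0 : Matrix (Fin s) (Fin s) F)
        = Matrix.fromBlocks (D ^ p) 0 (0 : Matrix (Fin s) (Fin r) F)
          (0 : Matrix (Fin s) (Fin s) F) := by
      have := c1
      rw [hV, Bpow, hN, hB] at this
      simpa only [Matrix.fromBlocks_multiply, Matrix.mul_zero, Matrix.zero_mul, add_zero,
        zero_add] using this
    have e1 : D ^ p * V11 * D = D ^ p := (Matrix.fromBlocks_inj.mp c1').1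
    have hV11D : V11 * D = 1 := by
      have : (D ^ p)⁻¹ * (D ^ p * V11 * D) = (D ^ p)⁻¹ * D ^ p := by rw [e1]
      rwa [hDp2, mul_assoc (D ^ p) V11 D, ← mul_assoc ((D ^ p)⁻¹) (D ^ p) (V11 * D), hDp2,
        Matrix.one_mul] at this
    have hV11 : V11 = D⁻¹ := by
      calc V11 = V11 * (D * D⁻¹) := by rw [hD1, Matrix.mul_one]
        _ = (V11 * D) * D⁻¹ := by rw [mul_assoc]
        _ = D⁻¹ := by rw [hV11D, Matrix.one_mul]
    -- bottom-right block is N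
    have c2' : V22 * N * V22 - N * V22 * N = V22 - N := by
      have h := c2
      rw [hV, hV12z, hV21z, hB] at h
      simp only [Matrix.fromBlocks_multiply, Matrix.mul_zero, Matrix.zero_mul, add_zero,
        zero_add, zero_mul, mul_zero] at h
      rw [fromBlocks_sub', fromBlocks_sub'] at h
      exact (Matrix.fromBlocks_inj.mp h).2.2.2
    have hcom : Commute N V22 := e22
    have hnil : IsNilpotent (N * V22) := ⟨p, by rw [hcom.mul_pow, hN, Matrix.zero_mul]⟩
    have hunit : IsUnit (1 - N * V22) := hnil.isUnit_one_sub
    have key : (1 - N * V22) * (V22 - N) = (1 - N * V22) * 0 := by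
      have expand : (1 - N * V22) * (V22 - N)
          = (V22 - N) - (N * V22 * V22 - N * V22 * N) := by noncomm_ring
      rw [mul_zero, expand, ← c2', ← e22]
      noncomm_ring
    have hV22N : V22 = N := by
      have := hunit.mul_left_cancel key
      rwa [sub_eq_zero] at this
    rw [hW, hV, hV11, hV12z, hV21z, hV22N]
end

section
/- Let $A$ be a square matrix over a field $F$ with Drazin inverse $A_d$. Then the complete inverse of $A$ equals $A + A_d - (A_d)_d$, where $(A_d)_d$ is the Drazin inverse of $A_d$. -/
/-- Uniqueness of the Drazin inverse (any two Drazin inverses, possibly of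
different indices, coincide). -/
private lemma drazin_unique {R : Type*} [Ring R] (B X Y : R) (q r : ℕ)
    (hx1 : B ^ q * X * B = B ^ q) (hx2 : X * B * X = X) (hx3 : B * X = X * B)
    (hy1 : B ^ r * Y * B = B ^ r) (hy2 : Y * B * Y = Y) (hy3 : B * Y = Y * B) :
    X = Y := by
  have hXl : ∀ k, B ^ k * X ^ (k + 1) = X := by
    intro k
    induction k with
    | zero => simp
    | succ n ih =>
      have h : B ^ (n + 1) * X ^ (n + 2) = B * (B ^ n * X ^ (n + 1)) * X := by
        rw [pow_succ' B n, pow_succ X (n + 1), ← mul_assoc, mul_assoc B (B ^ n) (X ^ (n + 1))]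
      rw [h, ih, hx3]
      exact hx2
  have hYr : ∀ k, Y ^ (k + 1) * B ^ k = Y := by
    intro k
    induction k with
    | zero => simp
    | succ n ih =>
      have h : Y ^ (n + 2) * B ^ (n + 1) = Y * (Y ^ (n + 1) * B ^ n) * B := by
        rw [pow_succ' Y (n + 1), pow_succ B n, ← mul_assoc, mul_assoc Y (Y ^ (n + 1)) (B ^ n)]
      rw [h, ih, mul_assoc, ← hy3, ← mul_assoc]
      exact hy2
  have cBY : Commute B Y := hy3
  have key1 : B ^ r = Y * B ^ (r + 1) := by
    calc B ^ r = B ^ r * Y * B := hy1.symm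
      _ = Y * B ^ r * B := by rw [(cBY.pow_left r).eq]
      _ = Y * B ^ (r + 1) := by rw [mul_assoc, ← pow_succ]
  have key2 : B ^ q = B ^ (q + 1) * X := by
    calc B ^ q = B ^ q * X * B := hx1.symm
      _ = B ^ q * (B * X) := by rw [mul_assoc, ← hx3]
      _ = B ^ (q + 1) * X := by rw [← mul_assoc, ← pow_succ]
  have hX : X = Y * (B * X) := by
    calc X = B ^ r * X ^ (r + 1) := (hXl r).symm
      _ = Y * B ^ (r + 1) * X ^ (r + 1) := by rw [← key1]
      _ = Y * (B * (B ^ r * X ^ (r + 1))) := by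
          rw [mul_assoc, pow_succ' B r, mul_assoc]
      _ = Y * (B * X) := by rw [hXl r]
  have hY : Y = Y * (B * X) := by
    calc Y = Y ^ (q + 1) * B ^ q := (hYr q).symm
      _ = Y ^ (q + 1) * (B ^ (q + 1) * X) := by rw [← key2]
      _ = (Y ^ (q + 1) * B ^ q) * (B * X) := by
          rw [pow_succ B q, mul_assoc (B ^ q) B X, ← mul_assoc]
      _ = Y * (B * X) := by rw [hYr q]
  rw [hX, ← hY]

theorem matrix_complete_eq_A_add_Ad_sub_Add {F : Type*} [Field F] {m : ℕ}
    (A Ad Add : Matrix (Fin m) (Fin m) F) (p q : ℕ) (hp : 0 < p) (hq : 0 < q)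
    (hd1 : A ^ p * Ad * A = A ^ p) (hd3 : Ad * A * Ad = Ad) (hd5 : A * Ad = Ad * A)
    (hdd1 : Ad ^ q * Add * Ad = Ad ^ q) (hdd3 : Add * Ad * Add = Add)
    (hdd5 : Ad * Add = Add * Ad) :
    (A ^ p * (A + Ad - Add) * A = A ^ p ∧
      (A + Ad - Add) * A * (A + Ad - Add) - A * (A + Ad - Add) * A = (A + Ad - Add) - A ∧
      A * (A + Ad - Add) = (A + Ad - Add) * A)
    ∧ ∀ W : Matrix (Fin m) (Fin m) F,
        (A ^ p * W * A = A ^ p ∧ W * A * W - A * W * A = W - A ∧ A * W = W * A) →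
        W = A + Ad - Add := by
  have m1 : Ad * A = A * Ad := hd5.symm
  have m2 : ∀ X : Matrix (Fin m) (Fin m) F, Ad * (A * X) = A * (Ad * X) := fun X => by
    rw [← mul_assoc, m1, mul_assoc]
  have m3 : A * (Ad * Ad) = Ad := by rw [← mul_assoc, hd5, hd3]
  have m4 : ∀ X : Matrix (Fin m) (Fin m) F, A * (Ad * (Ad * X)) = Ad * X := fun X => by
    rw [← mul_assoc, ← mul_assoc, mul_assoc A Ad Ad, m3]
  -- Step 1 : Add = A * A * Ad
  have c1 : Ad ^ 1 * (A * A * Ad) * Ad = Ad ^ 1 := by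
    rw [pow_one]
    simp only [mul_assoc, m1, m2, m3, m4]
  have c2 : (A * A * Ad) * Ad * (A * A * Ad) = A * A * Ad := by
    simp only [mul_assoc, m1, m2, m3, m4]
  have c3 : Ad * (A * A * Ad) = (A * A * Ad) * Ad := by
    simp only [mul_assoc, m1, m2, m3, m4]
  have hAdd : Add = A * A * Ad :=
    drazin_unique Ad Add (A * A * Ad) q 1 hdd1 hdd3 hdd5 c1 c2 c3
  subst hAdd
  -- auxiliary power facts
  have hpe : A ^ p * (A * Ad) = A ^ p := by
    rw [hd5, ← mul_assoc, hd1]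
  have cAAd : Commute A Ad := hd5
  have f6 : (A * Ad) * A ^ p = A ^ p := by
    calc (A * Ad) * A ^ p = A * (Ad * A ^ p) := mul_assoc _ _ _
      _ = A * (A ^ p * Ad) := by rw [(cAAd.symm.pow_right p).eq]
      _ = (A * A ^ p) * Ad := (mul_assoc _ _ _).symm
      _ = (A ^ p * A) * Ad := by rw [← pow_succ', pow_succ]
      _ = A ^ p * (A * Ad) := mul_assoc _ _ _
      _ = A ^ p := hpe
  have hEpow : Ad ^ p * A ^ p = A * Ad := by
    obtain ⟨k, rfl⟩ : ∃ k, p = k + 1 := ⟨p - 1, (Nat.succ_pred_eq_of_pos hp).symm⟩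
    have hmp : (Ad * A) ^ (k + 1) = Ad ^ (k + 1) * A ^ (k + 1) := cAAd.symm.mul_pow _
    rw [← hmp]
    have idem : (Ad * A) * (Ad * A) = Ad * A := by
      rw [← mul_assoc, hd3]
    have : ∀ n, (Ad * A) ^ (n + 1) = Ad * A := by
      intro n
      induction n with
      | zero => rw [pow_one]
      | succ j ih => rw [pow_succ, ih, idem]
    rw [this k, m1]
  constructor
  · refine ⟨?_, ?_, ?_⟩
    · -- A ^ p * (A + Ad - A*A*Ad) * A = A ^ p
      rw [mul_sub, mul_add, sub_mul, add_mul, hd1]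
      have cpa : A ^ p * (A * A) = (A * A) * A ^ p :=
        (((Commute.refl A).pow_left p).mul_right ((Commute.refl A).pow_left p)).eq
      have e2 : A ^ p * (A * A * Ad) * A = A ^ p * A * A := by
        calc A ^ p * (A * A * Ad) * A = (A ^ p * (A * A)) * Ad * A := by
              rw [← mul_assoc (A ^ p) (A * A) Ad]
          _ = ((A * A) * A ^ p) * Ad * A := by rw [cpa]
          _ = (A * A) * (A ^ p * Ad * A) := by
              rw [mul_assoc (A * A) (A ^ p) Ad, mul_assoc (A * A) (A ^ p * Ad) A]
          _ = (A * A) * A ^ p := by rw [hd1]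
          _ = A ^ p * (A * A) := cpa.symm
          _ = A ^ p * A * A := (mul_assoc _ _ _).symm
      rw [e2]
      abel
    · -- complete-inverse middle equation
      simp only [mul_add, add_mul, mul_sub, sub_mul, mul_assoc, m1, m2, m3, m4]
      abel
    · -- commutation
      simp only [mul_add, add_mul, mul_sub, sub_mul, mul_assoc, m1, m2, m3, m4]
  · rintro W ⟨hw1, hw2, hw3⟩
    rw [← hw3] at hw2
    -- hw2 : A * W * W - A * W * A = W - A
    have f2 : A * W * (W - A) = W - A := by
      rw [mul_sub]; exact hw2
    have f4 : ∀ n : ℕ, (A * W) ^ n * (W - A) = W - A := by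
      intro n
      induction n with
      | zero => simp
      | succ k ih => rw [pow_succ, mul_assoc, f2, ih]
    have cAW : Commute A W := hw3
    have f5 : (A * W) ^ p = A ^ p * W ^ p := cAW.mul_pow p
    have f7 : (A * Ad) * (W - A) = W - A := by
      have h := f4 p
      rw [f5, mul_assoc] at h
      calc (A * Ad) * (W - A) = (A * Ad) * (A ^ p * (W ^ p * (W - A))) := by rw [h]
        _ = ((A * Ad) * A ^ p) * (W ^ p * (W - A)) := (mul_assoc _ _ _).symm
        _ = A ^ p * (W ^ p * (W - A)) := by rw [f6]
        _ = W - A := h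
    have f7' : A * (Ad * (W - A)) = W - A := by
      rw [← mul_assoc]; exact f7
    have f8 : (A * Ad) * (A * W) = A * Ad := by
      have h : Ad ^ p * (A ^ p * W * A) = Ad ^ p * A ^ p := by rw [hw1]
      rw [← mul_assoc, ← mul_assoc, hEpow] at h
      -- h : A * Ad * W * A = A * Ad
      rw [hw3, ← mul_assoc]
      exact h
    have hWsum : A * W = A * A + A * (W - A) := by
      rw [← mul_add]
      congr 1
      abel
    have g1 : (A * Ad) * (A * (A * W)) = (A * Ad) * A := by
      calc (A * Ad) * (A * (A * W)) = (A * Ad) * (A * (W * A)) := by rw [hw3]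
        _ = (A * Ad) * ((A * W) * A) := by rw [mul_assoc A W A]
        _ = ((A * Ad) * (A * W)) * A := (mul_assoc _ _ _).symm
        _ = (A * Ad) * A := by rw [f8]
    have hcomm : (A * Ad) * (A * (A * (W - A))) = A * (A * (W - A)) := by
      simp only [mul_assoc, m2, f7']
    have g2 : (A * Ad) * (A * (A * W)) =
        (A * Ad) * (A * (A * A)) + A * (A * (W - A)) := by
      rw [hWsum, mul_add, mul_add, hcomm]
    have f9 : A * (A * (W - A)) = (A * Ad) * A - (A * Ad) * (A * (A * A)) := by
      rw [← g1, g2]; abel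
    have hAd2 : Ad * (Ad * (A * (A * (W - A)))) = W - A := by
      simp only [m2, m4, f7']
    have t1 : Ad * (Ad * ((A * Ad) * A)) = Ad := by
      simp only [mul_assoc, m1, m2, m3, m4]
    have t2 : Ad * (Ad * ((A * Ad) * (A * (A * A)))) = A * A * Ad := by
      simp only [mul_assoc, m1, m2, m3, m4]
    have hD : W - A = Ad - A * A * Ad := by
      calc W - A = Ad * (Ad * (A * (A * (W - A)))) := hAd2.symm
        _ = Ad * (Ad * ((A * Ad) * A - (A * Ad) * (A * (A * A)))) := by rw [f9]
        _ = Ad * (Ad * ((A * Ad) * A) - Ad * ((A * Ad) * (A * (A * A)))) := by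
            rw [mul_sub]
        _ = Ad * (Ad * ((A * Ad) * A)) - Ad * (Ad * ((A * Ad) * (A * (A * A)))) := by
            rw [mul_sub]
        _ = Ad - A * A * Ad := by rw [t1, t2]
    have : W = W - A + A := by abel
    rw [this, hD]
    abel
end

section
/- A square matrix $A$ over a field $F$ is invertible if and only if its complete inverse $A_c$ is invertible; and in that case $A_c = A^{-1}$. -/
/-!
Writing `X = a c - 1`, the second and third axioms give `(c - a) X = 0`, i.e. `c X = a X`; since `a`
and `c` commute this iterates to `c ^ p X = a ^ p X`, and the first axiom says `a ^ p X = 0`. So if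
`c` is a unit then `X = 0`, while if `a` is a unit then cancelling `a ^ p` in the first axiom gives
`c a = 1` directly.
-/

structure IsCompleteInverse {R : Type*} [Ring R] (p : ℕ) (a c : R) : Prop where
  pow_mul_mul : a ^ p * c * a = a ^ p
  mul_mul_sub_mul_mul : c * a * c - a * c * a = c - a
  commute : Commute a c

theorem Commute.pow_mul_eq_pow_mul {M : Type*} [Monoid M] {a b x : M} (hab : Commute a b)
    (h : a * x = b * x) (n : ℕ) : a ^ n * x = b ^ n * x := by
  induction n with
  | zero => simp
  | succ n ih =>
    calc a ^ (n + 1) * x = a ^ n * (b * x) := by rw [pow_succ, mul_assoc, h]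
      _ = b * (a ^ n * x) := by rw [← mul_assoc, (hab.pow_left n).eq, mul_assoc]
      _ = b ^ (n + 1) * x := by rw [ih, pow_succ', mul_assoc]

namespace IsCompleteInverse

variable {R : Type*} [Ring R] {p : ℕ} {a c : R}

theorem mul_eq_one_of_isUnit_left (h : IsCompleteInverse p a c) (ha : IsUnit a) : c * a = 1 :=
  (ha.pow p).mul_left_cancel (by rw [← mul_assoc, h.pow_mul_mul, mul_one])

theorem sub_mul_mul_sub_one (h : IsCompleteInverse p a c) : (c - a) * (a * c - 1) = 0 := by
  have hcomm : a * a * c = a * c * a := by rw [mul_assoc, mul_assoc, h.commute.eq]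
  calc (c - a) * (a * c - 1) = (c * a * c - a * c * a) - (c - a) := by
        rw [← hcomm]; noncomm_ring
    _ = 0 := by rw [h.mul_mul_sub_mul_mul, sub_self]

theorem mul_eq_one_of_isUnit_right (h : IsCompleteInverse p a c) (hc : IsUnit c) : c * a = 1 := by
  have hX : c * (a * c - 1) = a * (a * c - 1) :=
    sub_eq_zero.mp (by rw [← sub_mul]; exact h.sub_mul_mul_sub_one)
  have hpX : a ^ p * (a * c - 1) = 0 := by
    rw [mul_sub, mul_one, h.commute.eq, ← mul_assoc, h.pow_mul_mul, sub_self]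
  have hcpX : c ^ p * (a * c - 1) = 0 := by
    rw [h.commute.symm.pow_mul_eq_pow_mul hX p, hpX]
  rw [← h.commute.eq]
  exact sub_eq_zero.mp ((hc.pow p).mul_right_eq_zero.mp hcpX)

theorem isUnit_of_mul_eq_one (h : IsCompleteInverse p a c) (hca : c * a = 1) :
    IsUnit a ∧ IsUnit c :=
  ⟨isUnit_iff_exists.mpr ⟨c, h.commute.eq ▸ hca, hca⟩,
    isUnit_iff_exists.mpr ⟨a, hca, h.commute.eq ▸ hca⟩⟩

theorem isUnit_iff (h : IsCompleteInverse p a c) : IsUnit a ↔ IsUnit c :=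
  ⟨fun ha => (h.isUnit_of_mul_eq_one (h.mul_eq_one_of_isUnit_left ha)).2,
    fun hc => (h.isUnit_of_mul_eq_one (h.mul_eq_one_of_isUnit_right hc)).1⟩

end IsCompleteInverse

theorem matrix_invertible_iff_complete_invertible_general {F : Type*} [Field F] {m : ℕ}
    (A Ac : Matrix (Fin m) (Fin m) F) (p : ℕ)
    (h1 : A ^ p * Ac * A = A ^ p) (h4 : Ac * A * Ac - A * Ac * A = Ac - A)
    (h5 : A * Ac = Ac * A) :
    (IsUnit A ↔ IsUnit Ac) ∧ (IsUnit A → Ac = A⁻¹) := by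
  have h : IsCompleteInverse p A Ac := ⟨h1, h4, h5⟩
  exact ⟨h.isUnit_iff, fun hA => (Matrix.inv_eq_left_inv (h.mul_eq_one_of_isUnit_left hA)).symm⟩

theorem matrix_invertible_iff_complete_invertible {F : Type*} [Field F] {m : ℕ}
    (A Ac : Matrix (Fin m) (Fin m) F) (p : ℕ) (hp : 0 < p)
    (h1 : A ^ p * Ac * A = A ^ p) (h4 : Ac * A * Ac - A * Ac * A = Ac - A)
    (h5 : A * Ac = Ac * A) :
    (IsUnit A ↔ IsUnit Ac) ∧ (IsUnit A → Ac = A⁻¹) :=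
  matrix_invertible_iff_complete_invertible_general A Ac p h1 h4 h5
end
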